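/- arXiv:2209.09336 — 4 statements merged into one kernel-verified Lean document; each statement's English description precedes it below -/
import Mathlib

section
/- Let Σ be a finite alphabet, u₁, u₂ ∈ Σ* and v₁, v₂ ∈ Σ⁺. If the ultimately periodic ω-words u₁(v₁)^ω and u₂(v₂)^ω are not equal, then there exists an index n < max(|u₁|, |u₂|) + |v₁|·|v₂| at which they differ, i.e. (u₁(v₁)^ω)(n) ≠ (u₂(v₂)^ω)(n). -/
open Filter

/-- Extended transition function: `dstar δ q x` is the state reached from `q` reading `x`. -/
def dstar {Q A : Type*} (δ : Q → A → Q) (q : Q) (x : List A) : Q := x.foldl δ q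

/-- The run of a deterministic automaton on an ω-word from state `q`. -/
def run {Q A : Type*} (δ : Q → A → Q) (q : Q) (w : ℕ → A) : ℕ → Q
  | 0 => q
  | n + 1 => δ (run δ q w n) (w n)

/-- The set of states visited infinitely often by the run on `w` from `q`. -/
def infOcc {Q A : Type*} (δ : Q → A → Q) (q : Q) (w : ℕ → A) : Set Q :=
  {p | ∃ᶠ n in atTop, run δ q w n = p}

/-- `C` is a strongly connected component of the automaton with transitions `δ`. -/
def IsSCC {Q A : Type*} (δ : Q → A → Q) (C : Set Q) : Prop :=
  C.Nonempty ∧ ∀ q₁ ∈ C, ∀ q₂ ∈ C, ∃ x : List A, x ≠ [] ∧ dstar δ q₁ x = q₂ ∧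
    ∀ x', x' <+: x → dstar δ q₁ x' ∈ C

/-- `q` is reachable from the initial state `qι`. -/
def Reachable {Q A : Type*} (δ : Q → A → Q) (qι q : Q) : Prop :=
  ∃ x : List A, dstar δ qι x = q

/-- The ultimately periodic ω-word `u(v)^ω`. -/
def upWord {A : Type*} (u v : List A) (hv : v ≠ []) : ℕ → A := fun n =>
  if h : n < u.length then u[n]
  else v[(n - u.length) % v.length]'(Nat.mod_lt _ (List.length_pos_iff.mpr hv))

/-- The transition function of the product automaton. -/
def prodStep {Q₁ Q₂ A : Type*} (δ₁ : Q₁ → A → Q₁) (δ₂ : Q₂ → A → Q₂) :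
    Q₁ × Q₂ → A → Q₁ × Q₂ := fun p a => (δ₁ p.1 a, δ₂ p.2 a)

/-- The ω-word `x·z` obtained by prepending the finite word `x` to `z`. -/
def prepend {A : Type*} (x : List A) (z : ℕ → A) : ℕ → A := fun n =>
  if h : n < x.length then x[n] else z (n - x.length)

/-!
Beyond index `max |u₁| |u₂|` both words are `|v₁|·|v₂|`-periodic, so agreement on the first
`max |u₁| |u₂| + |v₁|·|v₂|` letters propagates to every index.
-/

lemma upWord_add_of_dvd {A : Type*} (u v : List A) (hv : v ≠ []) {n m : ℕ}
    (hn : u.length ≤ n) (hm : v.length ∣ m) :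
    upWord u v hv (n + m) = upWord u v hv n := by
  obtain ⟨k, rfl⟩ := hm
  have hshift : n + v.length * k - u.length = (n - u.length) + v.length * k := by omega
  simp only [upWord, dif_neg (show ¬n + v.length * k < u.length by omega),
    dif_neg (show ¬n < u.length by omega), hshift, Nat.add_mul_mod_self_left]

lemma funext_of_eventually_periodic {α : Type*} {f g : ℕ → α} {N L : ℕ} (hL : 0 < L)
    (hf : ∀ n ≥ N, f (n + L) = f n) (hg : ∀ n ≥ N, g (n + L) = g n)
    (hfg : ∀ n < N + L, f n = g n) : f = g := by
  funext n
  induction n using Nat.strong_induction_on with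
  | _ n ih =>
    by_cases hn : n < N + L
    · exact hfg n hn
    · obtain ⟨m, rfl⟩ : ∃ m, n = m + L := ⟨n - L, by omega⟩
      rw [hf m (by omega), hg m (by omega)]
      exact ih m (by omega)

theorem stmt0_general {A : Type*} (u₁ u₂ v₁ v₂ : List A)
    (hv₁ : v₁ ≠ []) (hv₂ : v₂ ≠ [])
    (hne : upWord u₁ v₁ hv₁ ≠ upWord u₂ v₂ hv₂) :
    ∃ n < max u₁.length u₂.length + v₁.length * v₂.length,
      upWord u₁ v₁ hv₁ n ≠ upWord u₂ v₂ hv₂ n := by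
  by_contra! hagree
  refine hne (funext_of_eventually_periodic
    (Nat.mul_pos (List.length_pos_iff.mpr hv₁) (List.length_pos_iff.mpr hv₂))
    (fun n hn => ?_) (fun n hn => ?_) hagree)
  · exact upWord_add_of_dvd u₁ v₁ hv₁ (le_of_max_le_left hn) (dvd_mul_right _ _)
  · exact upWord_add_of_dvd u₂ v₂ hv₂ (le_of_max_le_right hn) (dvd_mul_left _ _)

/-- If two ultimately periodic ω-words `u₁(v₁)^ω` and `u₂(v₂)^ω` differ, then they differ
at some index below `max |u₁| |u₂| + |v₁|·|v₂|`. -/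
theorem stmt0 {A : Type*} [Fintype A] (u₁ u₂ v₁ v₂ : List A)
    (hv₁ : v₁ ≠ []) (hv₂ : v₂ ≠ [])
    (hne : upWord u₁ v₁ hv₁ ≠ upWord u₂ v₂ hv₂) :
    ∃ n < max u₁.length u₂.length + v₁.length * v₂.length,
      upWord u₁ v₁ hv₁ n ≠ upWord u₂ v₂ hv₂ n :=
  stmt0_general u₁ u₂ v₁ v₂ hv₁ hv₂ hne
end

section
/- Let M be a complete deterministic automaton over a finite alphabet Σ with finite state set Q, and let C be a reachable SCC of M. Then there exist finite words u ∈ Σ* and v ∈ Σ⁺ with |u| + |v| ≤ |Q| + |C|² such that inf_M(u(v)^ω) = C. -/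
/-!
A reachable state is reached by a word of length at most `|Q|`, and two states of `C` are joined
inside `C` by a word of length at most `|C|`: a repeated state lets one cut out a loop. Choosing
`c₀ ∈ C` and chaining such words from `c₀` through the other `|C| - 1` states of `C` back to `c₀`
gives a cycle `v` of length at most `|C|²` that stays in `C` and visits all of it. After a word `u`
reaching `c₀`, the run on `u(v)^ω` traverses this cycle forever, so its infinitely visited states
are exactly `C`.
-/

open Filter

section Paths

variable {Q A : Type*} {δ : Q → A → Q}

def visited (δ : Q → A → Q) (q : Q) (x : List A) : Set Q :=
  {p | ∃ y, y <+: x ∧ dstar δ q y = p}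

lemma dstar_append (q : Q) (x y : List A) : dstar δ q (x ++ y) = dstar δ (dstar δ q x) y :=
  List.foldl_append ..

lemma visited_mono {q : Q} {x y : List A} (h : x <+: y) : visited δ q x ⊆ visited δ q y := by
  rintro _ ⟨z, hz, rfl⟩
  exact ⟨z, hz.trans h, rfl⟩

lemma start_mem_visited (q : Q) (x : List A) : q ∈ visited δ q x :=
  ⟨[], List.nil_prefix, rfl⟩

lemma visited_append (q : Q) (x y : List A) :
    visited δ q (x ++ y) = visited δ q x ∪ visited δ (dstar δ q x) y := by
  ext p
  constructor
  · rintro ⟨z, hz, rfl⟩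
    rw [← List.mem_inits, List.inits_append, List.mem_append, List.mem_map] at hz
    rcases hz with hz | ⟨z, hz, rfl⟩
    · exact Or.inl ⟨z, (List.mem_inits _ _).1 hz, rfl⟩
    · exact Or.inr ⟨z, (List.mem_inits _ _).1 (List.mem_of_mem_tail hz), (dstar_append ..).symm⟩
  · rintro (⟨z, hz, rfl⟩ | ⟨z, hz, rfl⟩)
    · exact ⟨z, hz.trans (List.prefix_append x y), rfl⟩
    · exact ⟨x ++ z, (List.prefix_append_right_inj x).2 hz, dstar_append ..⟩

section Pumping

variable {q : Q} {x : List A} {i j : ℕ}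

lemma dstar_take_append_drop (h : dstar δ q (x.take i) = dstar δ q (x.take j)) :
    dstar δ q (x.take i ++ x.drop j) = dstar δ q x := by
  rw [dstar_append, h, ← dstar_append, List.take_append_drop]

lemma visited_take_append_drop_subset (h : dstar δ q (x.take i) = dstar δ q (x.take j)) :
    visited δ q (x.take i ++ x.drop j) ⊆ visited δ q x := by
  rw [visited_append, h]
  refine Set.union_subset (visited_mono (List.take_prefix i x)) ?_
  conv_rhs => rw [← List.take_append_drop j x, visited_append]
  exact Set.subset_union_right

/-- Among the `|x|` states reached after nonempty prefixes of `x`, two coincide once `|x| > |S|`,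
and the loop between them can be cut out. -/
theorem exists_short_path {S : Set Q} (hS : S.Finite) (hx : x ≠ []) (hxS : visited δ q x ⊆ S) :
    ∃ y, y ≠ [] ∧ y.length ≤ S.ncard ∧ dstar δ q y = dstar δ q x ∧ visited δ q y ⊆ S := by
  induction hn : x.length using Nat.strong_induction_on generalizing x with
  | _ n ih =>
  by_cases hlen : n ≤ S.ncard
  · exact ⟨x, hx, hn ▸ hlen, rfl, hxS⟩
  obtain ⟨i, hi, j, hj, hij, heq⟩ := Set.exists_ne_map_eq_of_ncard_lt_of_maps_to
    (s := Set.Icc 1 n) (f := fun k => dstar δ q (x.take k)) (by simpa using hlen)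
    (fun k _ => hxS ⟨_, List.take_prefix k x, rfl⟩) hS
  wlog hlt : i < j generalizing i j
  · exact this j hj i hi hij.symm heq.symm (by omega)
  rw [Set.mem_Icc] at hi hj
  obtain ⟨y, hy, hyS, hyx, hyS'⟩ := ih (i + (n - j)) (by omega)
    (List.ne_nil_of_length_pos (by simp; omega))
    ((visited_take_append_drop_subset heq).trans hxS) (by simp; omega)
  exact ⟨y, hy, hyS, hyx.trans (dstar_take_append_drop heq), hyS'⟩

end Pumping

theorem Reachable.exists_length_le [Fintype Q] {qι q : Q} (h : Reachable δ qι q) :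
    ∃ u, dstar δ qι u = q ∧ u.length ≤ Fintype.card Q := by
  obtain ⟨x, rfl⟩ := h
  rcases eq_or_ne x [] with rfl | hx
  · exact ⟨[], rfl, Nat.zero_le _⟩
  obtain ⟨u, -, hu, hux, -⟩ := exists_short_path (Set.finite_univ (α := Q)) hx (Set.subset_univ _)
  exact ⟨u, hux, by simpa [Set.ncard_univ, Nat.card_eq_fintype_card] using hu⟩

section SCC

variable [Finite Q] {C : Set Q}

theorem IsSCC.exists_short_path (hC : IsSCC δ C) {q₁ q₂ : Q} (h₁ : q₁ ∈ C) (h₂ : q₂ ∈ C) :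
    ∃ x, x ≠ [] ∧ x.length ≤ C.ncard ∧ dstar δ q₁ x = q₂ ∧ visited δ q₁ x ⊆ C := by
  obtain ⟨x, hx, rfl, hxC⟩ := hC.2 q₁ h₁ q₂ h₂
  exact _root_.exists_short_path C.toFinite hx (by rintro _ ⟨y, hy, rfl⟩; exact hxC y hy)

/-- Chain `|L| + 1` short paths `q₁ → c₁ → ⋯ → cₘ → q₂` through the states `cᵢ` of `L`. -/
theorem IsSCC.exists_path_through (hC : IsSCC δ C) (L : List Q) (hL : ∀ c ∈ L, c ∈ C)
    {q₁ q₂ : Q} (h₁ : q₁ ∈ C) (h₂ : q₂ ∈ C) :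
    ∃ x, x ≠ [] ∧ x.length ≤ (L.length + 1) * C.ncard ∧ dstar δ q₁ x = q₂ ∧
      {c | c ∈ L} ⊆ visited δ q₁ x ∧ visited δ q₁ x ⊆ C := by
  induction L generalizing q₁ with
  | nil =>
    obtain ⟨x, hx, hlen, hxq, hxC⟩ := hC.exists_short_path h₁ h₂
    exact ⟨x, hx, by simpa using hlen, hxq, by simp, hxC⟩
  | cons c L ih =>
    have hc : c ∈ C := hL c List.mem_cons_self
    obtain ⟨x, hx, hxlen, hxc, hxC⟩ := hC.exists_short_path h₁ hc
    obtain ⟨y, -, hylen, hyq, hLy, hyC⟩ :=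
      ih (fun c' h' => hL c' (List.mem_cons_of_mem c h')) hc
    refine ⟨x ++ y, by simp [hx], ?_, by rw [dstar_append, hxc, hyq], ?_, ?_⟩
    · rw [List.length_append, List.length_cons, add_one_mul (L.length + 1)]
      omega
    · rw [visited_append, hxc]
      intro c' hc'
      rcases List.mem_cons.1 hc' with rfl | hc'
      · exact Or.inr (start_mem_visited _ _)
      · exact Or.inr (hLy hc')
    · rw [visited_append, hxc]
      exact Set.union_subset hxC hyC

theorem IsSCC.exists_cycle_visited_eq (hC : IsSCC δ C) {c₀ : Q} (h₀ : c₀ ∈ C) :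
    ∃ v, v ≠ [] ∧ v.length ≤ C.ncard ^ 2 ∧ dstar δ c₀ v = c₀ ∧ visited δ c₀ v = C := by
  have hfin : (C \ {c₀}).Finite := C.toFinite.sdiff
  obtain ⟨v, hv, hvlen, hvc, hLv, hvC⟩ :=
    hC.exists_path_through hfin.toFinset.toList (by simp +contextual) h₀ h₀
  have hcard : 0 < C.ncard := (Set.ncard_pos C.toFinite).2 ⟨c₀, h₀⟩
  refine ⟨v, hv, ?_, hvc, hvC.antisymm fun c hc => ?_⟩
  · rwa [Finset.length_toList, ← Set.ncard_eq_toFinset_card _ hfin,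
      Set.ncard_sdiff_singleton_of_mem h₀, Nat.sub_add_cancel hcard, ← sq] at hvlen
  · rcases eq_or_ne c c₀ with rfl | hne
    · exact start_mem_visited _ _
    · exact hLv (by simp [hc, hne])

end SCC

section UltimatelyPeriodic

variable {q : Q} {u v : List A}

lemma run_length_eq_dstar {w : ℕ → A} (h : ∀ i (hi : i < u.length), w i = u[i]) :
    run δ q w u.length = dstar δ q u := by
  induction u using List.reverseRecOn with
  | nil => rfl
  | append_singleton u a ih =>
    have hw : w u.length = a := by simpa using h u.length (by simp)
    rw [List.length_append, List.length_singleton, dstar_append, ← ih fun i hi => ?_]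
    · rw [← hw]
      rfl
    · exact (h i (by simp; omega)).trans (List.getElem_append_left hi)

lemma dstar_take_mod_length (hv : dstar δ q v = q) {k : ℕ} (hk : k ≤ v.length) :
    dstar δ q (v.take (k % v.length)) = dstar δ q (v.take k) := by
  rcases hk.lt_or_eq with hk | rfl
  · rw [Nat.mod_eq_of_lt hk]
  · rw [Nat.mod_self, List.take_zero, List.take_length, hv]
    rfl

lemma run_upWord_add {qι : Q} (hne : v ≠ []) (hu : dstar δ qι u = q) (hv : dstar δ q v = q)
    (n : ℕ) : run δ qι (upWord u v hne) (u.length + n) = dstar δ q (v.take (n % v.length)) := by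
  have hpos : 0 < v.length := List.length_pos_iff.2 hne
  induction n with
  | zero =>
    rw [Nat.add_zero, run_length_eq_dstar fun i hi => by simp [upWord, hi], hu]
    rfl
  | succ n ih =>
    have hlt : n % v.length < v.length := Nat.mod_lt n hpos
    have hw : upWord u v hne (u.length + n) = v[n % v.length] := by simp [upWord]
    change δ (run δ qι _ (u.length + n)) (upWord u v hne (u.length + n)) = _
    have hstep : δ (dstar δ q (v.take (n % v.length))) v[n % v.length] =
        dstar δ q (v.take (n % v.length + 1)) := by
      rw [List.take_add_one, List.getElem?_eq_getElem hlt, dstar_append]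
      rfl
    rw [ih, hw, hstep, ← dstar_take_mod_length hv (Nat.succ_le_of_lt hlt), Nat.succ_eq_add_one,
      Nat.mod_add_mod]

theorem infOcc_upWord {qι : Q} (hne : v ≠ []) (hu : dstar δ qι u = q) (hv : dstar δ q v = q) :
    infOcc δ qι (upWord u v hne) = visited δ q v := by
  have hpos : 0 < v.length := List.length_pos_iff.2 hne
  ext p
  constructor
  · intro hp
    obtain ⟨n, hn, rfl⟩ := frequently_atTop.1 hp u.length
    obtain ⟨m, rfl⟩ := Nat.exists_eq_add_of_le hn
    exact ⟨_, List.take_prefix _ _, (run_upWord_add hne hu hv m).symm⟩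
  · rintro ⟨y, hy, rfl⟩
    refine frequently_atTop.2 fun N => ⟨u.length + (y.length + N * v.length), ?_, ?_⟩
    · have := Nat.le_mul_of_pos_right N hpos
      omega
    · rw [run_upWord_add hne hu hv, Nat.add_mul_mod_self_right,
        dstar_take_mod_length hv hy.length_le, ← List.prefix_iff_eq_take.1 hy]

end UltimatelyPeriodic

end Paths

theorem stmt3_general {A Q : Type*} [Fintype Q] (δ : Q → A → Q) (qι : Q)
    (C : Set Q) (hC : IsSCC δ C) (hreach : ∀ q ∈ C, Reachable δ qι q) :
    ∃ (u v : List A) (hv : v ≠ []),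
      u.length + v.length ≤ Fintype.card Q + C.ncard ^ 2 ∧
      infOcc δ qι (upWord u v hv) = C := by
  obtain ⟨c₀, h₀⟩ := hC.1
  obtain ⟨v, hne, hvlen, hv, hvC⟩ := hC.exists_cycle_visited_eq h₀
  obtain ⟨u, hu, hulen⟩ := (hreach c₀ h₀).exists_length_le
  exact ⟨u, v, hne, add_le_add hulen hvlen, by rw [infOcc_upWord hne hu hv, hvC]⟩

/-- For every reachable SCC `C` there is an ultimately periodic word `u(v)^ω` of length at
most `|Q| + |C|²` whose set of infinitely visited states is exactly `C`. -/
theorem stmt3 {A Q : Type*} [Fintype A] [Fintype Q] (δ : Q → A → Q) (qι : Q)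
    (C : Set Q) (hC : IsSCC δ C) (hreach : ∀ q ∈ C, Reachable δ qι q) :
    ∃ (u v : List A) (hv : v ≠ []),
      u.length + v.length ≤ Fintype.card Q + C.ncard ^ 2 ∧
      infOcc δ qι (upWord u v hv) = C :=
  stmt3_general δ qι C hC hreach
end

section
/- Let M be a complete deterministic automaton over a finite alphabet Σ with finite state set, let F be an SCC of M, and let q ∈ F. Let L(M, F, q) denote the set of ω-words w such that the run of M on w starting at q visits only states of F and visits every state of F infinitely often. Then there exists a complete deterministic Büchi acceptor B over Σ with |F|² + 1 states such that ⟦B⟧ = L(M, F, q). -/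
open Filter

/-- `L(M, F, q)`: the ω-words whose run from `q` stays in `F` and visits every state of `F`
infinitely often. -/
def LMFq {Q A : Type*} (δ : Q → A → Q) (F : Set Q) (q : Q) : Set (ℕ → A) :=
  {w | (∀ n : ℕ, run δ q w n ∈ F) ∧ F ⊆ infOcc δ q w}

/-! The acceptor runs `M` inside `F`, remembering in addition one state of `F` that it awaits;
the awaited state advances along a fixed cyclic order of `F` exactly when the run reaches it,
and these moments are the accepting ones. Leaving `F` leads to a rejecting sink. If the run
reaches the awaited state infinitely often, the awaited state cycles through all of `F`, so
every state of `F` recurs; conversely, if every state of `F` recurs, the awaited state cannot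
get stuck. -/

theorem Finite.exists_forall_exists_iterate_eq (α : Type*) [Finite α] :
    ∃ f : α → α, ∀ a b, ∃ n, f^[n] a = b := by
  obtain ⟨k, ⟨e⟩⟩ := Finite.exists_equiv_fin α
  have hconj : Function.Semiconj e.symm (finRotate k) (e.symm ∘ finRotate k ∘ e) :=
    fun x => by simp
  refine ⟨e.symm ∘ finRotate k ∘ e, fun a b => ⟨(e b - e a).val, ?_⟩⟩
  have : NeZero k := NeZero.of_pos (Fin.pos (e a))
  have h := hconj.iterate_right (e b - e a).val (e a)
  rw [Equiv.symm_apply_apply] at h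
  rw [← h, ← finCycle_eq_finRotate_iterate, finCycle_apply, add_sub_cancel,
    Equiv.symm_apply_apply]

section RoundRobin

variable {S : Type*} [DecidableEq S] (next : S → S) (r : ℕ → S)

def awaited (t₀ : S) : ℕ → S
  | 0 => t₀
  | n + 1 => if r n = awaited t₀ n then next (awaited t₀ n) else awaited t₀ n

variable {next r}

theorem exists_ge_eq_awaited_of_frequently (t₀ : S)
    (hhit : ∃ᶠ n in atTop, r n = awaited next r t₀ n) (n : ℕ) :
    ∃ m ≥ n, r m = awaited next r t₀ m ∧ awaited next r t₀ m = awaited next r t₀ n := by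
  obtain ⟨m₀, hm₀, hhit⟩ := frequently_atTop.1 hhit n
  obtain ⟨d, rfl⟩ := Nat.exists_eq_add_of_le hm₀
  clear hm₀
  induction d generalizing n with
  | zero => exact ⟨n, le_rfl, hhit, rfl⟩
  | succ d ih =>
    by_cases hn : r n = awaited next r t₀ n
    · exact ⟨n, le_rfl, hn, rfl⟩
    · obtain ⟨m, hm, hm'⟩ := ih (n + 1) (by rwa [Nat.add_right_comm])
      refine ⟨m, by omega, hm'.1, hm'.2.trans ?_⟩
      simp only [awaited, if_neg hn]

theorem exists_ge_eq_iterate_awaited (t₀ : S)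
    (hhit : ∃ᶠ n in atTop, r n = awaited next r t₀ n) (j n : ℕ) :
    ∃ m ≥ n, r m = next^[j] (awaited next r t₀ n) := by
  induction j generalizing n with
  | zero =>
    obtain ⟨m, hmn, hm, hmt⟩ := exists_ge_eq_awaited_of_frequently t₀ hhit n
    exact ⟨m, hmn, hm.trans hmt⟩
  | succ j ih =>
    obtain ⟨m, hmn, hm, hmt⟩ := exists_ge_eq_awaited_of_frequently t₀ hhit n
    obtain ⟨m', hm'm, hm'⟩ := ih (m + 1)
    refine ⟨m', by omega, ?_⟩
    rwa [awaited, if_pos hm, hmt, ← Function.iterate_succ_apply] at hm'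

theorem frequently_eq_awaited_of_forall_frequently (t₀ : S) (h : ∀ s, ∃ᶠ n in atTop, r n = s) :
    ∃ᶠ n in atTop, r n = awaited next r t₀ n := by
  intro hev
  obtain ⟨N, hN⟩ := eventually_atTop.1 (hev : ∀ᶠ n in atTop, r n ≠ awaited next r t₀ n)
  have hconst : ∀ n ≥ N, awaited next r t₀ n = awaited next r t₀ N := by
    intro n hn
    induction n, hn using Nat.le_induction with
    | base => rfl
    | succ n hn ih => rw [awaited, if_neg (hN n hn), ih]
  obtain ⟨n, hn, hrn⟩ := frequently_atTop.1 (h (awaited next r t₀ N)) N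
  exact hN n hn (hrn.trans (hconst n hn).symm)

theorem frequently_eq_awaited_iff (hnext : ∀ a b, ∃ n, next^[n] a = b) (t₀ : S) :
    (∃ᶠ n in atTop, r n = awaited next r t₀ n) ↔ ∀ s, ∃ᶠ n in atTop, r n = s := by
  refine ⟨fun hhit s => frequently_atTop.2 fun N => ?_,
    frequently_eq_awaited_of_forall_frequently t₀⟩
  obtain ⟨j, hj⟩ := hnext (awaited next r t₀ N) s
  simpa only [hj] using exists_ge_eq_iterate_awaited t₀ hhit j N

end RoundRobin

section Run

variable {Q A : Type*} (δ : Q → A → Q)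

theorem run_eq_of_absorbing {s : Q} (hs : ∀ a, δ s a = s) {q : Q} {w : ℕ → A} {n m : ℕ}
    (hn : run δ q w n = s) (hnm : n ≤ m) : run δ q w m = s := by
  induction m, hnm using Nat.le_induction with
  | base => exact hn
  | succ m _ ih => rw [run, ih, hs]

theorem run_equiv {Q' : Type*} (e : Q ≃ Q') (q : Q) (w : ℕ → A) (n : ℕ) :
    run (fun s a => e (δ (e.symm s) a)) (e q) w n = e (run δ q w n) := by
  induction n with
  | zero => rfl
  | succ n ih => simp only [run, ih, Equiv.symm_apply_apply]

theorem infOcc_equiv {Q' : Type*} (e : Q ≃ Q') (q : Q) (w : ℕ → A) :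
    infOcc (fun s a => e (δ (e.symm s) a)) (e q) w = e '' infOcc δ q w := by
  ext s
  simp only [infOcc, Set.mem_ofPred_eq, Set.mem_image_equiv, run_equiv, ← e.eq_symm_apply]

end Run

section RoundRobinAcceptor

variable {Q A : Type*} [DecidableEq Q] (δ : Q → A → Q) (F : Set Q) [DecidablePred (· ∈ F)]
  (next : F → F)

def roundRobinStep : Option (F × F) → A → Option (F × F)
  | none, _ => none
  | some (p, t), a =>
    if h : δ p a ∈ F then some (⟨δ p a, h⟩, if p = t then next t else t) else none

variable {δ F next}

theorem run_roundRobinStep_of_forall_mem {q : Q} {w : ℕ → A} (hrun : ∀ n, run δ q w n ∈ F)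
    (t₀ : F) (n : ℕ) :
    run (roundRobinStep δ F next) (some (⟨q, hrun 0⟩, t₀)) w n =
      some (⟨run δ q w n, hrun n⟩, awaited next (fun m => ⟨run δ q w m, hrun m⟩) t₀ n) := by
  induction n with
  | zero => rfl
  | succ n ih =>
    simp only [run, ih, roundRobinStep, awaited]
    exact dif_pos (hrun (n + 1))

theorem run_roundRobinStep_eq_some {q : Q} (hq : q ∈ F) {t₀ p t : F} {w : ℕ → A} {n : ℕ}
    (h : run (roundRobinStep δ F next) (some (⟨q, hq⟩, t₀)) w n = some (p, t)) :
    (p : Q) = run δ q w n := by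
  induction n generalizing p t with
  | zero => cases h; rfl
  | succ n ih =>
    rcases hn : run (roundRobinStep δ F next) (some (⟨q, hq⟩, t₀)) w n with _ | ⟨p', t'⟩ <;>
      simp only [run, hn, roundRobinStep] at h
    · cases h
    · split_ifs at h <;> cases h <;> simp only [run, ← ih hn]

theorem run_mem_of_frequently_run_roundRobinStep_isSome {q : Q} (hq : q ∈ F) {t₀ : F}
    {w : ℕ → A} (h : ∃ᶠ n in atTop, (run (roundRobinStep δ F next) (some (⟨q, hq⟩, t₀)) w n).isSome)
    (n : ℕ) : run δ q w n ∈ F := by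
  obtain ⟨m, hnm, hm⟩ := frequently_atTop.1 h n
  rcases hn : run (roundRobinStep δ F next) (some (⟨q, hq⟩, t₀)) w n with _ | ⟨p, t⟩
  · rw [run_eq_of_absorbing _ (fun _ => rfl) hn hnm] at hm
    cases hm
  · exact run_roundRobinStep_eq_some hq hn ▸ p.2

theorem infOcc_roundRobinStep_inter_nonempty_iff [Finite F]
    (hnext : ∀ a b, ∃ n, next^[n] a = b) {q : Q} (hq : q ∈ F) (w : ℕ → A) :
    (infOcc (roundRobinStep δ F next) (some (⟨q, hq⟩, ⟨q, hq⟩)) w ∩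
        Set.range fun p => some (p, p)).Nonempty ↔ w ∈ LMFq δ F q := by
  constructor
  · rintro ⟨_, hp, p, rfl⟩
    have hrun : ∀ n, run δ q w n ∈ F :=
      run_mem_of_frequently_run_roundRobinStep_isSome hq
        (hp.mono fun _ hn => Option.isSome_iff_exists.2 ⟨_, hn⟩)
    have hhit : ∃ᶠ n in atTop, (⟨run δ q w n, hrun n⟩ : F) =
        awaited next (fun m => ⟨run δ q w m, hrun m⟩) ⟨q, hq⟩ n := hp.mono fun n hn => by
      rw [run_roundRobinStep_of_forall_mem hrun, Option.some_inj, Prod.mk.injEq] at hn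
      exact hn.1.trans hn.2.symm
    refine ⟨hrun, fun s hs => ?_⟩
    exact ((frequently_eq_awaited_iff hnext _).1 hhit ⟨s, hs⟩).mono fun n hn =>
      congrArg Subtype.val hn
  · rintro ⟨hrun, hinf⟩
    have hhit := (frequently_eq_awaited_iff hnext ⟨q, hq⟩).2 fun s : F =>
      (hinf s.2).mono fun n (hn : run δ q w n = s) =>
        (Subtype.ext hn : (⟨run δ q w n, hrun n⟩ : F) = s)
    have hacc : ∃ᶠ n in atTop, ∃ p,
        run (roundRobinStep δ F next) (some (⟨q, hq⟩, ⟨q, hq⟩)) w n = some (p, p) :=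
      hhit.mono fun n hn => ⟨_, by rw [run_roundRobinStep_of_forall_mem hrun, ← hn]⟩
    obtain ⟨p, hp⟩ := frequently_exists.1 hacc
    exact ⟨_, hp, p, rfl⟩

end RoundRobinAcceptor

theorem stmt14_general {A Q : Type*} [Fintype Q] (δ : Q → A → Q) (F : Set Q)
    (q : Q) (hq : q ∈ F) :
    ∃ (Q' : Type) (_ : Fintype Q') (δ' : Q' → A → Q') (init' : Q') (F' : Set Q'),
      Fintype.card Q' = F.ncard ^ 2 + 1 ∧
      ∀ w : ℕ → A, (infOcc δ' init' w ∩ F').Nonempty ↔ w ∈ LMFq δ F q := by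
  classical
  obtain ⟨next, hnext⟩ := Finite.exists_forall_exists_iterate_eq F
  -- `Q'` has to live in `Type`, unlike `F`, so the states `Option (F × F)` are renumbered.
  let e : Option (F × F) ≃ Option (Fin (Nat.card F) × Fin (Nat.card F)) :=
    Equiv.optionCongr (Equiv.prodCongr (Finite.equivFin F) (Finite.equivFin F))
  refine ⟨_, inferInstance, fun s a => e (roundRobinStep δ F next (e.symm s) a),
    e (some (⟨q, hq⟩, ⟨q, hq⟩)), e '' Set.range fun p => some (p, p), ?_, fun w => ?_⟩
  · rw [Fintype.card_option, Fintype.card_prod, Fintype.card_fin, Nat.card_coe_set_eq, sq]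
  · rw [infOcc_equiv, ← Set.image_inter e.injective, Set.image_nonempty]
    exact infOcc_roundRobinStep_inter_nonempty_iff hnext hq w

/-- For an SCC `F` and `q ∈ F`, there is a complete deterministic Büchi acceptor with
`|F|² + 1` states accepting exactly `L(M, F, q)`. -/
theorem stmt14 {A Q : Type*} [Fintype A] [Fintype Q] (δ : Q → A → Q) (F : Set Q)
    (hF : IsSCC δ F) (q : Q) (hq : q ∈ F) :
    ∃ (Q' : Type) (_ : Fintype Q') (δ' : Q' → A → Q') (init' : Q') (F' : Set Q'),
      Fintype.card Q' = F.ncard ^ 2 + 1 ∧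
      ∀ w : ℕ → A, (infOcc δ' init' w ∩ F').Nonempty ↔ w ∈ LMFq δ F q :=
  stmt14_general δ F q hq
end

section
/- Let U₁ = (M₁, {F₁}) be a complete deterministic Muller acceptor with a single final state set F₁, and let U₂ = (M₂, 𝓕₂) be a complete deterministic Muller acceptor over the same finite alphabet, both with finite state sets. Then ⟦U₁⟧ ⊆ ⟦U₂⟧ if and only if for every reachable state (q₁, q₂) of the product automaton M₁ × M₂ with q₁ ∈ F₁, L(M₁, F₁, q₁) ⊆ ⟦U₂^{q₂}⟧, where L(M₁, F₁, q₁) is the set of ω-words whose run in M₁ starting at q₁ visits only states of F₁ and visits every state of F₁ infinitely often, and U₂^{q₂} is U₂ with initial state replaced by q₂. -/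
open Filter

/-!
Every product state reachable by a finite word `x` can be combined with a word `w ∈ L(M₁, F₁, p₁)`
into `x·w`, whose run in `M₁` has infinity set exactly `F₁` and whose run in `M₂` ends up in the
run of `w` from `p₂`. Conversely, when `inf_{M₁}(w) = F₁` the run of `M₁` eventually stays inside
`F₁` (the state space is finite), so from some position `n₀` on, the suffix of `w` lies in
`L(M₁, F₁, p₁)` for the product state `(p₁, p₂)` reached after `n₀` letters; infinity sets do not
change under taking suffixes.
-/

section Runs

variable {Q A : Type*} (δ : Q → A → Q)

lemma run_add (q : Q) (w : ℕ → A) (m n : ℕ) :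
    run δ q w (m + n) = run δ (run δ q w m) (Stream'.drop m w) n := by
  induction n with
  | zero => rfl
  | succ n ih =>
    show δ (run δ q w (m + n)) (w (m + n)) = δ (run δ _ _ n) (w (n + m))
    rw [ih, Nat.add_comm]

lemma run_eq_dstar (q : Q) (w : ℕ → A) (n : ℕ) :
    run δ q w n = dstar δ q ((List.range n).map w) := by
  induction n with
  | zero => rfl
  | succ n ih => simp [List.range_succ, dstar, run, ih, List.foldl_append]

lemma run_prepend_length (q : Q) (x : List A) (w : ℕ → A) :
    run δ q (prepend x w) x.length = dstar δ q x := by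
  suffices ∀ n ≤ x.length, run δ q (prepend x w) n = dstar δ q (x.take n) by
    simpa using this x.length le_rfl
  intro n hn
  induction n with
  | zero => rfl
  | succ n ih =>
    have hn' : n < x.length := hn
    rw [run, ih hn'.le, prepend, dif_pos hn', ← List.take_concat_get' x n hn']
    simp only [dstar, List.foldl_concat]

lemma drop_length_prepend (x : List A) (w : ℕ → A) :
    Stream'.drop x.length (prepend x w) = w := by
  funext k
  simp [Stream'.drop, Stream'.get, prepend]

lemma infOcc_eq_infOcc_drop (q : Q) (w : ℕ → A) (m : ℕ) :
    infOcc δ q w = infOcc δ (run δ q w m) (Stream'.drop m w) := by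
  ext p
  unfold infOcc
  rw [Set.mem_ofPred_eq, Set.mem_ofPred_eq]
  nth_rw 1 [← map_add_atTop_eq_nat m]
  simp only [frequently_map, ← run_add, add_comm]

lemma infOcc_prepend (q : Q) (x : List A) (w : ℕ → A) :
    infOcc δ q (prepend x w) = infOcc δ (dstar δ q x) w := by
  rw [infOcc_eq_infOcc_drop δ q _ x.length, run_prepend_length, drop_length_prepend]

lemma eventually_run_mem_infOcc [Finite Q] (q : Q) (w : ℕ → A) :
    ∀ᶠ n in atTop, run δ q w n ∈ infOcc δ q w := by
  have hfin : ∀ p ∉ infOcc δ q w, ∀ᶠ n in atTop, run δ q w n ≠ p := fun p hp =>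
    not_frequently.mp hp
  filter_upwards [(Set.toFinite (infOcc δ q w)ᶜ).eventually_all.mpr hfin] with n hn
  by_contra h
  exact hn _ h rfl

lemma infOcc_eq_of_mem_LMFq {F : Set Q} {q : Q} {w : ℕ → A} (hw : w ∈ LMFq δ F q) :
    infOcc δ q w = F := by
  refine Set.Subset.antisymm ?_ hw.2
  rintro p hp
  obtain ⟨n, rfl⟩ := hp.exists
  exact hw.1 n

lemma exists_drop_mem_LMFq [Finite Q] {F : Set Q} {q : Q} {w : ℕ → A}
    (hw : infOcc δ q w = F) : ∃ n₀, Stream'.drop n₀ w ∈ LMFq δ F (run δ q w n₀) := by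
  obtain ⟨n₀, hn₀⟩ := eventually_atTop.mp (eventually_run_mem_infOcc δ q w)
  refine ⟨n₀, fun n => ?_, ?_⟩
  · rw [← run_add, ← hw]
    exact hn₀ _ (Nat.le_add_right n₀ n)
  · rw [← hw, ← infOcc_eq_infOcc_drop]

end Runs

section Product

variable {Q₁ Q₂ A : Type*} (δ₁ : Q₁ → A → Q₁) (δ₂ : Q₂ → A → Q₂)

lemma dstar_prodStep (q₁ : Q₁) (q₂ : Q₂) (x : List A) :
    dstar (prodStep δ₁ δ₂) (q₁, q₂) x = (dstar δ₁ q₁ x, dstar δ₂ q₂ x) := by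
  induction x generalizing q₁ q₂ with
  | nil => rfl
  | cons a l ih => exact ih _ _

lemma reachable_prodStep_run (q₁ : Q₁) (q₂ : Q₂) (w : ℕ → A) (n : ℕ) :
    Reachable (prodStep δ₁ δ₂) (q₁, q₂) (run δ₁ q₁ w n, run δ₂ q₂ w n) :=
  ⟨(List.range n).map w, by rw [dstar_prodStep, ← run_eq_dstar, ← run_eq_dstar]⟩

end Product

theorem stmt15_general {A Q₁ Q₂ : Type*} [Fintype Q₁]
    (δ₁ : Q₁ → A → Q₁) (init₁ : Q₁) (F₁ : Set Q₁)
    (δ₂ : Q₂ → A → Q₂) (init₂ : Q₂) (𝓕₂ : Set (Set Q₂)) :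
    {w : ℕ → A | infOcc δ₁ init₁ w ∈ ({F₁} : Set (Set Q₁))} ⊆
        {w | infOcc δ₂ init₂ w ∈ 𝓕₂} ↔
      ∀ p₁ : Q₁, ∀ p₂ : Q₂, Reachable (prodStep δ₁ δ₂) (init₁, init₂) (p₁, p₂) → p₁ ∈ F₁ →
        LMFq δ₁ F₁ p₁ ⊆ {w | infOcc δ₂ p₂ w ∈ 𝓕₂} := by
  simp only [Set.subset_def, Set.mem_ofPred_eq, Set.mem_singleton_iff]
  constructor
  · rintro h p₁ p₂ ⟨x, hx⟩ - w hw
    rw [dstar_prodStep, Prod.mk.injEq] at hx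
    have hx₂ := h (prepend x w) (by rw [infOcc_prepend, hx.1, infOcc_eq_of_mem_LMFq δ₁ hw])
    rwa [infOcc_prepend, hx.2] at hx₂
  · intro h w hw
    obtain ⟨n₀, hn₀⟩ := exists_drop_mem_LMFq δ₁ hw
    rw [infOcc_eq_infOcc_drop δ₂ init₂ w n₀]
    exact h _ _ (reachable_prodStep_run δ₁ δ₂ init₁ init₂ w n₀) (hn₀.1 0) _ hn₀

/-- For a DMA `U₁` with a single final state set `F₁` and a DMA `U₂`, inclusion holds iff for
every reachable product state `(p₁, p₂)` with `p₁ ∈ F₁`, `L(M₁, F₁, p₁) ⊆ ⟦U₂^{p₂}⟧`. -/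
theorem stmt15 {A Q₁ Q₂ : Type*} [Fintype A] [Fintype Q₁] [Fintype Q₂]
    (δ₁ : Q₁ → A → Q₁) (init₁ : Q₁) (F₁ : Set Q₁)
    (δ₂ : Q₂ → A → Q₂) (init₂ : Q₂) (𝓕₂ : Set (Set Q₂)) :
    {w : ℕ → A | infOcc δ₁ init₁ w ∈ ({F₁} : Set (Set Q₁))} ⊆
        {w | infOcc δ₂ init₂ w ∈ 𝓕₂} ↔
      ∀ p₁ : Q₁, ∀ p₂ : Q₂, Reachable (prodStep δ₁ δ₂) (init₁, init₂) (p₁, p₂) → p₁ ∈ F₁ →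
        LMFq δ₁ F₁ p₁ ⊆ {w | infOcc δ₂ p₂ w ∈ 𝓕₂} :=
  stmt15_general δ₁ init₁ F₁ δ₂ init₂ 𝓕₂
end
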